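/- Let C be a set of constraints, e a complete example, and Y ⊆ X. If S ⊆ Y is a minimal scope for e and C, then every minimal scope M ⊆ Y for e and C with M ≠ S satisfies M ⊆ Y \ {x} for some x ∈ S. Consequently, every minimal scope contained in Y other than S is contained in one of the sets Y \ {x}, x ∈ S. -/

import Mathlib

/-- A constraint over variables `V` with domains `D`: a scope together with a
relation (set of complete examples) whose membership depends only on the
values on the scope. -/
structure Constraint (V : Type*) (D : V → Type*) where
  scope : Set V
  rel : Set ((x : V) → D x)
  scope_determines : ∀ e e' : (x : V) → D x,
    (∀ x ∈ scope, e x = e' x) → (e ∈ rel ↔ e' ∈ rel)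

/-- `kappa C e Y` is the set of constraints of `C` violated by the complete
example `e` on `Y`: those `c ∈ C` with `scope(c) ⊆ Y` and `e ∉ rel(c)`. -/
def kappa {V : Type*} {D : V → Type*} (C : Set (Constraint V D))
    (e : (x : V) → D x) (Y : Set V) : Set (Constraint V D) :=
  {c | c ∈ C ∧ c.scope ⊆ Y ∧ e ∉ c.rel}

/-- `S` is a minimal scope for example `e` and network `C`. -/
def MinimalScope {V : Type*} {D : V → Type*} (C : Set (Constraint V D))
    (e : (x : V) → D x) (S : Set V) : Prop :=
  kappa C e S ≠ ∅ ∧ ∀ x ∈ S, kappa C e (S \ {x}) = ∅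

section

variable {V : Type*} {D : V → Type*} {C : Set (Constraint V D)} {e : (x : V) → D x}

theorem kappa_mono {S T : Set V} (h : S ⊆ T) : kappa C e S ⊆ kappa C e T :=
  fun _ ⟨hcC, hcS, hce⟩ => ⟨hcC, hcS.trans h, hce⟩

theorem MinimalScope.eq_of_subset {S M : Set V} (hS : MinimalScope C e S)
    (hM : MinimalScope C e M) (hSM : S ⊆ M) : S = M := by
  by_contra hne
  obtain ⟨x, hxM, hxS⟩ := Set.exists_of_ssubset (hSM.ssubset_of_ne hne)
  have hS_sub : S ⊆ M \ {x} := Set.subset_sdiff_singleton hSM hxS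
  exact hS.1 (Set.subset_empty_iff.mp (hM.2 x hxM ▸ kappa_mono hS_sub))

end

theorem minimalScope_covering_general {V : Type*} {D : V → Type*}
    (C : Set (Constraint V D))
    (e : (x : V) → D x) (Y S : Set V)
    (hS : MinimalScope C e S) :
    ∀ M ⊆ Y, MinimalScope C e M → M ≠ S → ∃ x ∈ S, M ⊆ Y \ {x} := by
  intro M hMY hM hMS
  have hSM : ¬ S ⊆ M := fun hSM => hMS (hS.eq_of_subset hM hSM).symm
  obtain ⟨x, hxS, hxM⟩ := Set.not_subset.mp hSM
  exact ⟨x, hxS, Set.subset_sdiff_singleton hMY hxM⟩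

/-- If `S ⊆ Y` is a minimal scope for `e` and `C`, then every minimal scope
`M ⊆ Y` with `M ≠ S` is contained in `Y \ {x}` for some `x ∈ S`. -/
theorem minimalScope_covering {V : Type*} [Finite V] {D : V → Type*}
    (hD : ∀ x, Nonempty (D x)) (C : Set (Constraint V D))
    (e : (x : V) → D x) (Y S : Set V)
    (hSY : S ⊆ Y) (hS : MinimalScope C e S) :
    ∀ M ⊆ Y, MinimalScope C e M → M ≠ S → ∃ x ∈ S, M ⊆ Y \ {x} :=
  minimalScope_covering_general C e Y S hS
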